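/- arXiv:1601.00262 — 8 statements merged into one kernel-verified Lean document; each statement's English description precedes it below -/
import Mathlib

section
/- Let (π_i)_{i∈ι} be a family of groups and G = ∗_i π_i their free product, with canonical injections of_i : π_i →* G. For any two distinct indices i ≠ j and any element g ∈ G, the intersection of the subgroup (of_i).range with the conjugate subgroup g·(of_j).range·g⁻¹ is the trivial subgroup. -/
/-!
Let `p : ∗ₖ πₖ →* π j` be the projection onto the `j`-th factor killing all the others. It kills
`of '' π i` but is injective on `of '' π j`, and its kernel is normal, so it is also injective on
every conjugate of `of '' π j`; hence that conjugate meets `of '' π i` trivially.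
-/

theorem Subgroup.inf_map_conj_eq_bot_of_le_ker {G H : Type*} [Group G] [Group H] (f : G →* H)
    {A B : Subgroup G} (hA : A ≤ f.ker) (hB : Disjoint B f.ker) (g : G) :
    A ⊓ B.map (MulAut.conj g).toMonoidHom = ⊥ := by
  rw [eq_bot_iff]
  rintro _ ⟨hzA, b, hb, rfl⟩
  have hfb : f b = 1 := by
    simpa [MonoidHom.mem_ker] using hA hzA
  have hb1 : b = 1 := Subgroup.disjoint_def.mp hB hb (f.mem_ker.mpr hfb)
  simp [hb1]

namespace Monoid.CoprodI

variable {ι : Type*} {π : ι → Type*} [∀ i, Monoid (π i)] [DecidableEq ι]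

def proj (j : ι) : CoprodI π →* π j :=
  lift (Pi.mulSingle j (MonoidHom.id (π j)))

@[simp]
theorem proj_of_self (j : ι) (y : π j) : proj j (of y) = y := by
  simp [proj]

theorem proj_of_of_ne {i j : ι} (hij : i ≠ j) (x : π i) : proj j (of x) = 1 := by
  simp [proj, Pi.mulSingle_eq_of_ne hij]

end Monoid.CoprodI

theorem free_product_factor_inter_conj_distinct_factor_eq_bot
    {ι : Type*} (π : ι → Type*) [∀ i, Group (π i)]
    (i j : ι) (hij : i ≠ j) (g : Monoid.CoprodI π) :
    (Monoid.CoprodI.of : π i →* Monoid.CoprodI π).range ⊓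
      ((Monoid.CoprodI.of : π j →* Monoid.CoprodI π).range.map
        (MulAut.conj g).toMonoidHom) = ⊥ := by
  classical
  refine Subgroup.inf_map_conj_eq_bot_of_le_ker (Monoid.CoprodI.proj j) ?_ ?_ g
  · rintro _ ⟨x, rfl⟩
    exact Monoid.CoprodI.proj_of_of_ne hij x
  · rw [Subgroup.disjoint_def]
    rintro _ ⟨y, rfl⟩ hy
    rw [MonoidHom.mem_ker, Monoid.CoprodI.proj_of_self] at hy
    rw [hy, map_one]
end

section
/- Let (π_i)_{i∈ι} be a family of groups and G = ∗_i π_i their free product, with canonical injections of_i : π_i →* G. If for some index i and some g ∈ G the intersection of (of_i).range with the conjugate g·(of_i).range·g⁻¹ is a nontrivial subgroup, then g ∈ (of_i).range, and consequently g·(of_i).range·g⁻¹ = (of_i).range. -/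
/-!
Suppose `g * of b * g⁻¹ = of a` with `a, b ∈ G i` and `b ≠ 1`, and induct on the length of the
reduced word of `g`. If the last letter of `g` is not from `G i`, then `g · b · g⁻¹` is already
a reduced word of length at least three, so it is not a single letter. Otherwise `g⁻¹` begins
with a letter `c ∈ G i`, so `g⁻¹ = c · t` with `t` shorter and `t · a · t⁻¹ = c⁻¹ b c ∈ G i`;
by induction `t ∈ G i`, hence `g ∈ G i`.
-/

namespace Monoid.CoprodI

variable {ι : Type*}

namespace NeWord

theorem exists_prod_eq_of_head_mul {M : ι → Type*} [∀ i, Monoid (M i)] {i j : ι}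
    (u : NeWord M i j) :
    ∃ t : Word M, t.toList.length + 1 = u.toList.length ∧ u.prod = of u.head * t.prod := by
  obtain ⟨l, hl⟩ : ∃ l, u.toList = ⟨i, u.head⟩ :: l :=
    List.head?_eq_some_iff.mp u.toList_head?
  have hw : u.toWord.toList = ⟨i, u.head⟩ :: l := hl
  refine ⟨⟨l, fun x hx ↦ u.toWord.ne_one x (hw ▸ List.mem_cons_of_mem _ hx),
    (hw ▸ u.toWord.chain_ne).tail⟩, by simp [hl], ?_⟩
  simp only [NeWord.prod, Word.prod, hw, List.map_cons, List.prod_cons]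

variable {G : ι → Type*} [∀ i, Group (G i)]

theorem length_inv {i j : ι} (u : NeWord G i j) : u.inv.toList.length = u.toList.length := by
  induction u with
  | singleton => rfl
  | append _ _ _ ih₁ ih₂ => simp only [inv, toList, List.length_append, ih₁, ih₂, add_comm]

variable [DecidableEq ι] [∀ i, DecidableEq (G i)]

theorem prod_ne_of_two_le_length {i j k : ι} (v : NeWord G j k) (hv : 2 ≤ v.toList.length)
    (a : G i) : v.prod ≠ of a := by
  intro h
  have hlen : v.toWord.toList.length ≤ 1 := by
    by_cases ha : a = 1
    · have : v.toWord = Word.empty :=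
        Word.equiv.symm.injective (h.trans (by rw [ha, map_one]; rfl))
      simp [this]
    · have : v.toWord = (singleton a ha).toWord :=
        Word.equiv.symm.injective (h.trans (prod_singleton a ha).symm)
      rw [this]
      simp [toWord]
  exact absurd hv (by simpa [toWord] using hlen)

theorem prod_mul_of_mul_prod_inv_ne_of {i j k : ι} (u : NeWord G j k) (hk : k ≠ i) {b : G i}
    (hb : b ≠ 1) (a : G i) : u.prod * of b * u.prod⁻¹ ≠ of a := by
  let v := (u.append hk (singleton b hb)).append hk.symm u.inv
  have hv : v.prod = u.prod * of b * u.prod⁻¹ := by simp [v]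
  have hlen : 2 ≤ v.toList.length := by
    have := List.length_pos_of_ne_nil u.toList_ne_nil
    simp only [v, toList, List.length_append, List.length_singleton]
    omega
  exact hv ▸ v.prod_ne_of_two_le_length hlen a

end NeWord

variable {G : ι → Type*} [∀ i, Group (G i)] [DecidableEq ι] [∀ i, DecidableEq (G i)]

theorem Word.prod_mem_range_of_conj_mem_range {i : ι} (w : Word G) {b : G i} (hb : b ≠ 1)
    (h : w.prod * of b * w.prod⁻¹ ∈ (of : G i →* CoprodI G).range) :
    w.prod ∈ (of : G i →* CoprodI G).range := by
  by_cases hw : w = Word.empty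
  · simp [hw, one_mem]
  obtain ⟨j, k, u, hu⟩ := NeWord.of_word w hw
  have hwu : w.prod = u.prod := by rw [← hu]; rfl
  obtain ⟨a, ha⟩ := h
  rw [hwu] at ha ⊢
  by_cases hk : k = i
  · subst hk
    obtain ⟨t, ht, hut⟩ := u.inv.exists_prod_eq_of_head_mul
    set c := u.inv.head
    rw [NeWord.inv_prod] at hut
    have ha1 : a ≠ 1 := by
      rintro rfl
      rw [map_one, eq_comm, conj_eq_one_iff, map_eq_one_iff _ (of_injective _)] at ha
      exact hb ha
    have hconj : t.prod * of a * t.prod⁻¹ = of (c⁻¹ * b * c) := by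
      have ht' : t.prod = of c⁻¹ * u.prod⁻¹ := by rw [hut, map_inv, inv_mul_cancel_left]
      rw [ht', ha]
      simp only [map_mul, map_inv]
      group
    have hlt : t.toList.length < w.toList.length := by
      rw [← hu]
      change _ < u.toList.length
      have := u.length_inv
      omega
    obtain ⟨d, hd⟩ := prod_mem_range_of_conj_mem_range t ha1 ⟨_, hconj.symm⟩
    exact ⟨(c * d)⁻¹, by rw [map_inv, map_mul, hd, ← hut, inv_inv]⟩
  · exact absurd ha.symm (u.prod_mul_of_mul_prod_inv_ne_of hk hb a)
termination_by w.toList.length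

theorem mem_range_of_conj_mem_range {i : ι} (g : CoprodI G) {b : G i} (hb : b ≠ 1)
    (h : g * of b * g⁻¹ ∈ (of : G i →* CoprodI G).range) :
    g ∈ (of : G i →* CoprodI G).range := by
  have hg : (Word.equiv g).prod = g := Word.equiv.symm_apply_apply g
  rw [← hg] at h ⊢
  exact Word.prod_mem_range_of_conj_mem_range _ hb h

end Monoid.CoprodI

theorem free_product_factor_inter_conj_self_nontrivial
    {ι : Type*} (π : ι → Type*) [∀ i, Group (π i)]
    (i : ι) (g : Monoid.CoprodI π)
    (h : (Monoid.CoprodI.of : π i →* Monoid.CoprodI π).range ⊓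
      ((Monoid.CoprodI.of : π i →* Monoid.CoprodI π).range.map
        (MulAut.conj g).toMonoidHom) ≠ ⊥) :
    g ∈ (Monoid.CoprodI.of : π i →* Monoid.CoprodI π).range ∧
      (Monoid.CoprodI.of : π i →* Monoid.CoprodI π).range.map
        (MulAut.conj g).toMonoidHom =
        (Monoid.CoprodI.of : π i →* Monoid.CoprodI π).range := by
  classical
  obtain ⟨x, ⟨⟨a, rfl⟩, y, ⟨b, rfl⟩, hy⟩, hx⟩ := (Subgroup.bot_or_exists_ne_one _).resolve_left h
  have hb : b ≠ 1 := by
    rintro rfl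
    exact hx (by simp [← hy])
  have hg := Monoid.CoprodI.mem_range_of_conj_mem_range g hb ⟨a, by simpa using hy.symm⟩
  exact ⟨hg, Subgroup.conj_smul_eq_self_of_mem hg⟩
end

section
/- Let ρ and r be natural numbers and m : Fin r → ℕ a function with m i ≥ 2 for every i, and set E := 2ρ − 2 + ∑_{i : Fin r} (1 − 1/(m i)) as a rational number. If E > 0, then E ≥ 1/42. -/
/-!
Write `S = ∑ 1/mᵢ`, so that `E = 2ρ - 2 + r - S` with `0 ≤ S ≤ r/2`. Hence `E ≥ 1/2` as soon as
`4ρ + r ≥ 5`, while `E ≤ 0` when `2ρ + r ≤ 2`; this leaves `ρ = 0` with `r = 3` or `r = 4`.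
For `r = 4` the ramification indices cannot all be `2`, so `S ≤ 2 - 1/6`. For `r = 3` the classical
enumeration of triples with `1/a + 1/b + 1/c < 1` shows that the largest such sum is
`1/2 + 1/3 + 1/7 = 41/42`.
-/

open Finset

lemma natCast_inv_le_inv {a b : ℕ} (ha : 0 < a) (h : a ≤ b) : (b : ℚ)⁻¹ ≤ (a : ℚ)⁻¹ :=
  inv_anti₀ (by exact_mod_cast ha) (by exact_mod_cast h)

lemma natCast_inv_le_inv_succ_of_lt {k c : ℕ} (h : (c : ℚ)⁻¹ < (k : ℚ)⁻¹) :
    (c : ℚ)⁻¹ ≤ ((k + 1 : ℕ) : ℚ)⁻¹ := by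
  obtain rfl | hc := Nat.eq_zero_or_pos c
  · simp only [Nat.cast_zero, inv_zero]
    positivity
  have hkc : k < c := by
    by_contra! hck
    exact (natCast_inv_le_inv hc hck).not_gt h
  exact natCast_inv_le_inv k.succ_pos hkc

lemma inv_add_inv_add_inv_le_of_lt_one_of_le {a b c : ℕ} (ha : 2 ≤ a) (hab : a ≤ b)
    (hbc : b ≤ c) (h : (a : ℚ)⁻¹ + (b : ℚ)⁻¹ + (c : ℚ)⁻¹ < 1) :
    (a : ℚ)⁻¹ + (b : ℚ)⁻¹ + (c : ℚ)⁻¹ ≤ 41 / 42 := by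
  have hb := natCast_inv_le_inv (by omega) hab
  have hc := natCast_inv_le_inv (by omega) hbc
  rcases le_or_gt 4 a with ha4 | ha4
  · have := natCast_inv_le_inv (by norm_num) ha4
    norm_num at this
    linarith
  interval_cases a
  · rcases le_or_gt 5 b with hb5 | hb5
    · have := natCast_inv_le_inv (by norm_num) hb5
      norm_num at this ⊢
      linarith
    interval_cases b
    · have : (0 : ℚ) < (c : ℚ)⁻¹ := by positivity
      norm_num at h
      linarith
    · have := natCast_inv_le_inv_succ_of_lt (k := 6) (c := c)
        (by norm_num at h ⊢; linarith)
      norm_num at this ⊢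
      linarith
    · have := natCast_inv_le_inv_succ_of_lt (k := 4) (c := c)
        (by norm_num at h ⊢; linarith)
      norm_num at this ⊢
      linarith
  · rcases le_or_gt 4 b with hb4 | hb4
    · have := natCast_inv_le_inv (by norm_num) hb4
      norm_num at this ⊢
      linarith
    interval_cases b
    have := natCast_inv_le_inv_succ_of_lt (k := 3) (c := c)
      (by norm_num at h ⊢; linarith)
    norm_num at this ⊢
    linarith

lemma inv_add_inv_add_inv_le_of_lt_one {a b c : ℕ} (ha : 2 ≤ a) (hb : 2 ≤ b) (hc : 2 ≤ c)
    (h : (a : ℚ)⁻¹ + (b : ℚ)⁻¹ + (c : ℚ)⁻¹ < 1) :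
    (a : ℚ)⁻¹ + (b : ℚ)⁻¹ + (c : ℚ)⁻¹ ≤ 41 / 42 := by
  wlog hab : a ≤ b generalizing a b
  · have := this hb ha (by linarith) (by omega)
    linarith
  wlog hbc : b ≤ c generalizing a b c
  · rcases le_total a c with hac | hca
    · have := this hb ha hc (by linarith) hac (by omega)
      linarith
    · have := this hb hc ha (by linarith) hca hab
      linarith
  exact inv_add_inv_add_inv_le_of_lt_one_of_le ha hab hbc h

section

variable {ι : Type*} [Fintype ι] {m : ι → ℕ}

lemma sum_natCast_inv_le_card_div_two (hm : ∀ i, 2 ≤ m i) :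
    ∑ i, (m i : ℚ)⁻¹ ≤ Fintype.card ι / 2 := by
  calc ∑ i, (m i : ℚ)⁻¹ ≤ ∑ _i : ι, ((2 : ℕ) : ℚ)⁻¹ :=
        sum_le_sum fun i _ => natCast_inv_le_inv two_pos (hm i)
    _ = Fintype.card ι / 2 := by simp [div_eq_mul_inv]

lemma sum_natCast_inv_le_card_div_two_sub_of_lt (hm : ∀ i, 2 ≤ m i)
    (h : ∑ i, (m i : ℚ)⁻¹ < Fintype.card ι / 2) :
    ∑ i, (m i : ℚ)⁻¹ ≤ Fintype.card ι / 2 - 1 / 6 := by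
  classical
  obtain ⟨j, hj⟩ : ∃ j, 3 ≤ m j := by
    by_contra! hall
    have hm2 : ∀ i, m i = 2 := fun i => le_antisymm (Nat.le_of_lt_succ (hall i)) (hm i)
    simp [hm2, div_eq_mul_inv] at h
  calc ∑ i, (m i : ℚ)⁻¹ ≤ ∑ i, ((2 : ℚ)⁻¹ - if i = j then 1 / 6 else 0) := by
        refine sum_le_sum fun i _ => ?_
        split_ifs with hij
        · subst hij
          have := natCast_inv_le_inv (by norm_num) hj
          norm_num at this ⊢
          linarith
        · simpa using natCast_inv_le_inv two_pos (hm i)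
    _ = Fintype.card ι / 2 - 1 / 6 := by simp [sum_sub_distrib, div_eq_mul_inv]

end

theorem riemannHurwitz_positive_ge_one_div_42
    (ρ r : ℕ) (m : Fin r → ℕ) (hm : ∀ i, 2 ≤ m i)
    (E : ℚ) (hE : E = 2 * (ρ : ℚ) - 2 + ∑ i : Fin r, (1 - 1 / (m i : ℚ)))
    (hpos : 0 < E) :
    1 / 42 ≤ E := by
  set S := ∑ i, (m i : ℚ)⁻¹ with hS
  have hES : E = 2 * ρ - 2 + r - S := by
    simp only [hE, S, one_div, sum_sub_distrib, sum_const, card_univ, Fintype.card_fin,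
      nsmul_eq_mul, mul_one]
    ring
  have hS0 : 0 ≤ S := by positivity
  have hSr : S ≤ r / 2 := by simpa using sum_natCast_inv_le_card_div_two hm
  by_cases hlarge : 5 ≤ 4 * ρ + r
  · have : (5 : ℚ) ≤ 4 * ρ + r := by exact_mod_cast hlarge
    linarith
  have hsmall : 3 ≤ 2 * ρ + r := by
    by_contra! hle
    have : (2 * ρ + r : ℚ) ≤ 2 := by exact_mod_cast (by omega : 2 * ρ + r ≤ 2)
    linarith
  obtain ⟨rfl, rfl | rfl⟩ : ρ = 0 ∧ (r = 3 ∨ r = 4) := by omega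
  · norm_num at hES
    rw [Fin.sum_univ_three] at hS
    have := inv_add_inv_add_inv_le_of_lt_one (hm 0) (hm 1) (hm 2) (by linarith)
    linarith
  · norm_num at hES
    have := sum_natCast_inv_le_card_div_two_sub_of_lt hm (by norm_num; linarith)
    norm_num at this
    linarith
end

section
/- Let ρ and r be natural numbers and m : Fin r → ℕ a function with m i ≥ 2 for every i, and set E := 2ρ − 2 + ∑_{i : Fin r} (1 − 1/(m i)) as a rational number. Then E = 1/42 if and only if ρ = 0, r = 3, and the multiset of values {m 0, m 1, m 2} equals the multiset {2, 3, 7}. -/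
/-!
Every branch term `1 - 1/m` with `m ≥ 2` lies in `[1/2, 1]`, equal to `1/2` only for `m = 2` and
at least `2/3` otherwise. Without branch points `E = 2ρ - 2` is an integer; with at least one, the
terms contribute at least `1/2`, so `E = 1/42` forces `2ρ - 2 < 0`, i.e. `ρ = 0`, and the terms
sum to `85/42`. Hence there are three or four branch points; four is impossible (the sum is then
`2` or at least `13/6`), and for three sorted orders `a ≤ b ≤ c` the equation
`1/a + 1/b + 1/c = 41/42` bounds `a ≤ 3` and `b ≤ 4`, leaving only `(2, 3, 7)`.
-/

open Multiset

def branchDefect (n : ℕ) : ℚ := 1 - 1 / n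

theorem one_div_natCast_le_one_div_natCast {m n : ℕ} (hm : 0 < m) (hmn : m ≤ n) :
    (1 : ℚ) / n ≤ 1 / m := by
  gcongr

theorem branchDefect_le_branchDefect {m n : ℕ} (hm : 0 < m) (hmn : m ≤ n) :
    branchDefect m ≤ branchDefect n :=
  sub_le_sub_left (one_div_natCast_le_one_div_natCast hm hmn) 1

theorem branchDefect_le_one (n : ℕ) : branchDefect n ≤ 1 := by
  unfold branchDefect
  linarith [show (0 : ℚ) ≤ 1 / n by positivity]

theorem half_le_branchDefect {n : ℕ} (hn : 2 ≤ n) : 1 / 2 ≤ branchDefect n := by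
  convert branchDefect_le_branchDefect two_pos hn using 1
  norm_num [branchDefect]

theorem two_thirds_le_branchDefect {n : ℕ} (hn : 3 ≤ n) : 2 / 3 ≤ branchDefect n := by
  convert branchDefect_le_branchDefect three_pos hn using 1
  norm_num [branchDefect]

theorem eq_two_three_seven_of_one_div_add_one_div_add_one_div {a b c : ℕ} (ha : 2 ≤ a)
    (hab : a ≤ b) (hbc : b ≤ c) (h : (1 : ℚ) / a + 1 / b + 1 / c = 41 / 42) :
    a = 2 ∧ b = 3 ∧ c = 7 := by
  have hba : (1 : ℚ) / b ≤ 1 / a := one_div_natCast_le_one_div_natCast (by omega) hab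
  have hcb : (1 : ℚ) / c ≤ 1 / b := one_div_natCast_le_one_div_natCast (by omega) hbc
  have ha3 : a ≤ 3 := by
    by_contra! ha4
    have : (1 : ℚ) / a ≤ 1 / 4 := one_div_natCast_le_one_div_natCast (by norm_num) ha4
    linarith
  have hb4 : b ≤ 4 := by
    by_contra! hb5
    have : (1 : ℚ) / a ≤ 1 / 2 := one_div_natCast_le_one_div_natCast (by norm_num) ha
    have : (1 : ℚ) / b ≤ 1 / 5 := one_div_natCast_le_one_div_natCast (by norm_num) hb5
    linarith
  have hcleared : 42 * (b * c + a * c + a * b) = 41 * (a * b * c) := by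
    have : (a : ℚ) ≠ 0 := Nat.cast_ne_zero.mpr (by omega)
    have : (b : ℚ) ≠ 0 := Nat.cast_ne_zero.mpr (by omega)
    have : (c : ℚ) ≠ 0 := Nat.cast_ne_zero.mpr (by omega)
    field_simp at h
    exact_mod_cast
      (by linear_combination h : (42 * (b * c + a * c + a * b) : ℚ) = 41 * (a * b * c))
  interval_cases a <;> interval_cases b <;> omega

section sum

variable {s : Multiset ℕ}

theorem card_div_two_le_sum_map_branchDefect (hs : ∀ n ∈ s, 2 ≤ n) :
    (card s : ℚ) / 2 ≤ (s.map branchDefect).sum := by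
  have := card_nsmul_le_sum (s := s.map branchDefect) (a := 1 / 2) <| by
    simpa using fun n hn => half_le_branchDefect (hs n hn)
  simpa [div_eq_mul_inv] using this

theorem sum_map_branchDefect_le_card (s : Multiset ℕ) : (s.map branchDefect).sum ≤ card s := by
  simpa using sum_le_card_nsmul (s.map branchDefect) 1 <| by
    simpa using fun n _ => branchDefect_le_one n

theorem sum_map_branchDefect_ne_of_card_eq_four (hs : ∀ n ∈ s, 2 ≤ n) (h4 : card s = 4) :
    (s.map branchDefect).sum ≠ 85 / 42 := by
  by_cases hall : ∀ n ∈ s, n = 2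
  · rw [eq_replicate.mpr ⟨h4, hall⟩]
    norm_num [branchDefect]
  · push Not at hall
    obtain ⟨n, hn, hn2⟩ := hall
    obtain ⟨t, rfl⟩ := exists_cons_of_mem hn
    have ht : (card t : ℚ) = 3 := by simp_all
    have hn3 := two_thirds_le_branchDefect (n := n) (by have := hs n hn; omega)
    have ht_low := card_div_two_le_sum_map_branchDefect fun k hk => hs k (mem_cons_of_mem hk)
    rw [map_cons, sum_cons]
    linarith

theorem eq_two_three_seven_of_sum_map_branchDefect (hs : ∀ n ∈ s, 2 ≤ n) (h3 : card s = 3)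
    (h : (s.map branchDefect).sum = 85 / 42) : s = {2, 3, 7} := by
  obtain ⟨a, b, c, habc⟩ := List.length_eq_three.mp ((length_sort (s := s) (· ≤ ·)).trans h3)
  obtain ⟨hab, hbc⟩ : a ≤ b ∧ b ≤ c := by
    have := pairwise_sort s (· ≤ ·)
    simp_all
  rw [← sort_eq s (· ≤ ·), habc] at h hs ⊢
  simp only [map_coe, sum_coe, List.map_cons, List.map_nil, List.sum_cons, List.sum_nil,
    branchDefect] at h
  obtain ⟨rfl, rfl, rfl⟩ := eq_two_three_seven_of_one_div_add_one_div_add_one_div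
    (hs a (by simp)) hab hbc (by linarith)
  rfl

theorem sum_map_branchDefect_eq_85_div_42_iff (hs : ∀ n ∈ s, 2 ≤ n) :
    (s.map branchDefect).sum = 85 / 42 ↔ s = {2, 3, 7} := by
  refine ⟨fun h => ?_, fun h => by subst h; norm_num [branchDefect]⟩
  have hlow := card_div_two_le_sum_map_branchDefect hs
  have hup := sum_map_branchDefect_le_card s
  have h3 : 2 < card s := by
    have : (2 : ℚ) < card s := by linarith
    exact_mod_cast this
  have h4 : card s < 5 := by
    have : (card s : ℚ) < 5 := by linarith
    exact_mod_cast this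
  obtain h3 | h4 : card s = 3 ∨ card s = 4 := by omega
  · exact eq_two_three_seven_of_sum_map_branchDefect hs h3 h
  · exact absurd h (sum_map_branchDefect_ne_of_card_eq_four hs h4)

theorem eq_zero_of_two_mul_sub_two_add_sum_map_branchDefect_eq {ρ : ℕ} (hs : ∀ n ∈ s, 2 ≤ n)
    (h : 2 * (ρ : ℚ) - 2 + (s.map branchDefect).sum = 1 / 42) : ρ = 0 := by
  rcases eq_zero_or_pos s with rfl | hpos
  · have : (84 * ρ : ℚ) = 85 := by simp at h; linarith
    have : 84 * ρ = 85 := by exact_mod_cast this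
    omega
  · have hlow := card_div_two_le_sum_map_branchDefect hs
    have : (1 : ℚ) ≤ card s := by exact_mod_cast card_pos.mpr hpos.ne'
    have : (ρ : ℚ) < 1 := by linarith
    have : ρ < 1 := by exact_mod_cast this
    omega

theorem two_mul_sub_two_add_sum_map_branchDefect_eq_one_div_42_iff {ρ : ℕ}
    (hs : ∀ n ∈ s, 2 ≤ n) :
    2 * (ρ : ℚ) - 2 + (s.map branchDefect).sum = 1 / 42 ↔ ρ = 0 ∧ s = {2, 3, 7} := by
  refine ⟨fun h => ?_, fun ⟨hρ, hs⟩ => by subst hρ hs; norm_num [branchDefect]⟩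
  obtain rfl := eq_zero_of_two_mul_sub_two_add_sum_map_branchDefect_eq hs h
  refine ⟨rfl, (sum_map_branchDefect_eq_85_div_42_iff hs).mp ?_⟩
  push_cast at h
  linarith

end sum

theorem riemannHurwitz_eq_one_div_42_iff
    (ρ r : ℕ) (m : Fin r → ℕ) (hm : ∀ i, 2 ≤ m i)
    (E : ℚ) (hE : E = 2 * (ρ : ℚ) - 2 + ∑ i : Fin r, (1 - 1 / (m i : ℚ))) :
    E = 1 / 42 ↔
      ρ = 0 ∧ r = 3 ∧ Multiset.map m Finset.univ.val = ({2, 3, 7} : Multiset ℕ) := by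
  have hs : ∀ n ∈ Finset.univ.val.map m, 2 ≤ n := by simpa using hm
  have hsum : ∑ i : Fin r, (1 - 1 / (m i : ℚ)) =
      ((Finset.univ.val.map m).map branchDefect).sum := by
    rw [map_map]
    rfl
  have hcard : card (Finset.univ.val.map m) = r := by simp
  rw [hE, hsum, two_mul_sub_two_add_sum_map_branchDefect_eq_one_div_42_iff hs]
  constructor
  · rintro ⟨hρ, h237⟩
    exact ⟨hρ, by rw [← hcard, h237]; rfl, h237⟩
  · rintro ⟨hρ, -, h237⟩
    exact ⟨hρ, h237⟩
end

section
/- Let ρ and r be natural numbers and m : Fin r → ℕ a function with m i ≥ 2 for every i, and set E := 2ρ − 2 + ∑_{i : Fin r} (1 − 1/(m i)) as a rational number. If E > 0 and E ≠ 1/42, then E ≥ 1/24. -/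
/-!
Every term `1 - 1/mᵢ` lies in `[1/2, 1)`, so `E ≥ 2ρ - 2 + r/2 ≥ 1/2` unless `4ρ + r ≤ 4`,
while `E ≤ 2ρ - 2 + r ≤ 0` unless `2ρ + r ≥ 3`. This leaves `ρ = 0` and `r ∈ {3, 4}`.
For `r = 4`, `E > 0` forces some `mᵢ ≥ 3`, whence `E ≥ 1/6`. For `r = 3`,
`E = 1 - (1/a + 1/b + 1/c)`, and a case analysis on sorted triples shows that the two largest
values of `1/a + 1/b + 1/c` below `1` are `41/42`, from `(2, 3, 7)`, and `23/24`,
from `(2, 3, 8)`.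
-/

lemma one_div_natCast_le_one_div_natCast_s6 {K : Type*} [Field K] [LinearOrder K]
    [IsStrictOrderedRing K] {k n : ℕ} (hk : 0 < k) (h : k ≤ n) : 1 / (n : K) ≤ 1 / k :=
  one_div_le_one_div_of_le (Nat.cast_pos.mpr hk) (Nat.cast_le.mpr h)

lemma one_div_add_one_div_add_one_div_eq_or_le_of_le_of_le {a b c : ℕ} (ha : 2 ≤ a)
    (hab : a ≤ b) (hbc : b ≤ c) (hlt : 1 / (a : ℚ) + 1 / b + 1 / c < 1) :
    1 / (a : ℚ) + 1 / b + 1 / c = 41 / 42 ∨ 1 / (a : ℚ) + 1 / b + 1 / c ≤ 23 / 24 := by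
  have hc : 0 < 1 / (c : ℚ) := by
    have : (0 : ℚ) < c := by exact_mod_cast (show 0 < c by omega)
    positivity
  have one_div_le {k n : ℕ} (hk : 0 < k) (h : k ≤ n) : 1 / (n : ℚ) ≤ 1 / k :=
    one_div_natCast_le_one_div_natCast_s6 hk h
  rcases le_or_gt 4 a with ha4 | ha3
  · have := one_div_le (k := 4) (by norm_num) ha4
    have := one_div_le (k := 4) (by norm_num) (ha4.trans hab)
    have := one_div_le (k := 4) (by norm_num) ((ha4.trans hab).trans hbc)
    right; linarith
  interval_cases a
  · rcases le_or_gt 5 b with hb5 | hb4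
    · have := one_div_le (k := 5) (by norm_num) hb5
      have := one_div_le (k := 5) (by norm_num) (hb5.trans hbc)
      right; linarith
    interval_cases b
    · linarith
    · obtain hc6 | rfl | hc8 : c ≤ 6 ∨ c = 7 ∨ 8 ≤ c := by omega
      · have := one_div_le (by omega) hc6
        linarith
      · left; norm_num
      · have := one_div_le (k := 8) (by norm_num) hc8
        right; linarith
    · obtain rfl | hc5 : c = 4 ∨ 5 ≤ c := by omega
      · norm_num at hlt
      · have := one_div_le (k := 5) (by norm_num) hc5
        right; linarith
  · rcases le_or_gt 4 b with hb4 | hb3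
    · have := one_div_le (k := 4) (by norm_num) hb4
      have := one_div_le (k := 4) (by norm_num) (hb4.trans hbc)
      right; linarith
    interval_cases b
    obtain rfl | hc4 : c = 3 ∨ 4 ≤ c := by omega
    · norm_num at hlt
    · have := one_div_le (k := 4) (by norm_num) hc4
      right; linarith

lemma one_div_add_one_div_add_one_div_eq_or_le {a b c : ℕ} (ha : 2 ≤ a) (hb : 2 ≤ b)
    (hc : 2 ≤ c) (hlt : 1 / (a : ℚ) + 1 / b + 1 / c < 1) :
    1 / (a : ℚ) + 1 / b + 1 / c = 41 / 42 ∨ 1 / (a : ℚ) + 1 / b + 1 / c ≤ 23 / 24 := by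
  wlog hmin : a ≤ b ∧ a ≤ c generalizing a b c
  · obtain hba | hca : b ≤ a ∧ b ≤ c ∨ c ≤ a ∧ c ≤ b := by omega
    · have hperm : 1 / (b : ℚ) + 1 / a + 1 / c = 1 / a + 1 / b + 1 / c := by ring
      simpa only [hperm] using this hb ha hc (hperm ▸ hlt) hba
    · have hperm : 1 / (c : ℚ) + 1 / a + 1 / b = 1 / a + 1 / b + 1 / c := by ring
      simpa only [hperm] using this hc ha hb (hperm ▸ hlt) hca
  wlog hbc : b ≤ c generalizing b c
  · have hperm : 1 / (a : ℚ) + 1 / c + 1 / b = 1 / a + 1 / b + 1 / c := by ring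
    simpa only [hperm] using this hc hb (hperm ▸ hlt) ⟨hmin.2, hmin.1⟩ (by omega)
  exact one_div_add_one_div_add_one_div_eq_or_le_of_le_of_le ha hmin.1 hbc hlt

section

variable {ι : Type*} [Fintype ι] {m : ι → ℕ}

lemma sum_one_sub_one_div_le_card (m : ι → ℕ) :
    ∑ i, (1 - 1 / (m i : ℚ)) ≤ Fintype.card ι := by
  simpa using Finset.sum_le_card_nsmul Finset.univ (fun i ↦ 1 - 1 / (m i : ℚ)) 1
    fun i _ ↦ by simp only [sub_le_self_iff]; positivity

lemma card_div_two_le_sum_one_sub_one_div (hm : ∀ i, 2 ≤ m i) :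
    (Fintype.card ι : ℚ) / 2 ≤ ∑ i, (1 - 1 / (m i : ℚ)) := by
  have := Finset.card_nsmul_le_sum Finset.univ (fun i ↦ 1 - 1 / (m i : ℚ)) (1 / 2)
    fun i _ ↦ by linarith [one_div_natCast_le_one_div_natCast_s6 (K := ℚ) two_pos (hm i)]
  rwa [Finset.card_univ, nsmul_eq_mul, mul_one_div] at this

/-- Each term `1 - 1/mᵢ` is either `1/2` or at least `2/3`. -/
lemma card_div_two_add_one_div_six_le_sum_one_sub_one_div (hm : ∀ i, 2 ≤ m i)
    (hlt : (Fintype.card ι : ℚ) / 2 < ∑ i, (1 - 1 / (m i : ℚ))) :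
    (Fintype.card ι : ℚ) / 2 + 1 / 6 ≤ ∑ i, (1 - 1 / (m i : ℚ)) := by
  have hhalf : (Fintype.card ι : ℚ) / 2 = ∑ _i : ι, (1 / 2 : ℚ) := by
    rw [Finset.sum_const, Finset.card_univ, nsmul_eq_mul, mul_one_div]
  obtain ⟨i, -, hi⟩ := Finset.exists_lt_of_sum_lt (hhalf ▸ hlt)
  have hi3 : 3 ≤ m i := by
    obtain h2 | h3 : m i = 2 ∨ 3 ≤ m i := by have := hm i; omega
    · rw [h2] at hi; norm_num at hi
    · exact h3
  have hexcess : 1 / 6 ≤ ∑ j, ((1 - 1 / (m j : ℚ)) - 1 / 2) := by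
    refine le_trans ?_ (Finset.single_le_sum (fun j _ ↦ ?_) (Finset.mem_univ i))
    · linarith [one_div_natCast_le_one_div_natCast_s6 (K := ℚ) three_pos hi3]
    · linarith [one_div_natCast_le_one_div_natCast_s6 (K := ℚ) two_pos (hm j)]
  rw [Finset.sum_sub_distrib, ← hhalf] at hexcess
  linarith

end

theorem riemannHurwitz_positive_ne_one_div_42_ge_one_div_24
    (ρ r : ℕ) (m : Fin r → ℕ) (hm : ∀ i, 2 ≤ m i)
    (E : ℚ) (hE : E = 2 * (ρ : ℚ) - 2 + ∑ i : Fin r, (1 - 1 / (m i : ℚ)))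
    (hpos : 0 < E) (hne : E ≠ 1 / 42) :
    1 / 24 ≤ E := by
  have hlow := card_div_two_le_sum_one_sub_one_div hm
  have hup := sum_one_sub_one_div_le_card m
  rw [Fintype.card_fin] at hlow hup
  by_cases hbig : 5 ≤ 4 * ρ + r
  · have : (5 : ℚ) ≤ 4 * ρ + r := by exact_mod_cast hbig
    linarith
  have hsmall : 3 ≤ 2 * ρ + r := by
    by_contra! h
    have : (2 * ρ + r : ℚ) ≤ 2 := by exact_mod_cast (by omega : 2 * ρ + r ≤ 2)
    linarith
  obtain ⟨rfl, rfl | rfl⟩ : ρ = 0 ∧ (r = 3 ∨ r = 4) := by omega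
  · rw [Fin.sum_univ_three] at hE
    obtain h | h := one_div_add_one_div_add_one_div_eq_or_le (hm 0) (hm 1) (hm 2) (by linarith)
    · exact absurd (by linarith) hne
    · linarith
  · have := card_div_two_add_one_div_six_le_sum_one_sub_one_div hm
    rw [Fintype.card_fin] at this
    linarith [this (by linarith)]
end

section
/- Let σ ≥ 2 and n ≥ 1 be natural numbers, let ρ, r be natural numbers and m : Fin r → ℕ with m i ≥ 2 for every i, and set E := 2ρ − 2 + ∑_{i : Fin r} (1 − 1/(m i)) as a rational number. If E > 0 and (2σ − 2 : ℚ) = n · E, then n ≤ 84·(σ − 1) (the Hurwitz bound). -/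
/-!
Since 2σ - 2 = n·E, it suffices that E ≥ 1/42 whenever E > 0. Each term 1 - 1/mᵢ lies in
[1/2, 1), so E ≥ 1/2 unless ρ = 0 and r ∈ {3, 4}. For r = 4 some mᵢ ≥ 3 (otherwise E = 0),
which gives E ≥ 1/6; for r = 3, E = 1 - 1/a - 1/b - 1/c, whose least positive value, 1/42,
is attained at (2, 3, 7).
-/

open Finset

def negOrbifoldEulerChar (ρ : ℕ) {r : ℕ} (m : Fin r → ℕ) : ℚ :=
  2 * (ρ : ℚ) - 2 + ∑ i : Fin r, (1 - 1 / (m i : ℚ))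

lemma negOrbifoldEulerChar_eq (ρ : ℕ) {r : ℕ} (m : Fin r → ℕ) :
    negOrbifoldEulerChar ρ m = 2 * ρ - 2 + r - ∑ i, 1 / (m i : ℚ) := by
  simp only [negOrbifoldEulerChar, sum_sub_distrib, sum_const, card_univ, Fintype.card_fin,
    nsmul_eq_mul, mul_one]
  ring

lemma one_div_natCast_le_one_div {k a : ℕ} (hk : 0 < k) (h : k ≤ a) :
    1 / (a : ℚ) ≤ 1 / k :=
  one_div_le_one_div_of_le (by exact_mod_cast hk) (by exact_mod_cast h)

lemma lt_of_one_div_natCast_lt {k c : ℕ} (hc : 0 < c) (h : 1 / (c : ℚ) < 1 / k) : k < c := by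
  by_contra! hck
  exact h.not_ge (one_div_natCast_le_one_div hc hck)

lemma one_div_add_one_div_add_one_div_le_of_lt_one {a b c : ℕ} (ha : 2 ≤ a) (hb : 2 ≤ b)
    (hc : 2 ≤ c) (h : 1 / (a : ℚ) + 1 / b + 1 / c < 1) : 1 / (a : ℚ) + 1 / b + 1 / c ≤ 41 / 42 := by
  wlog hab : a ≤ b generalizing a b c
  · linarith [this hb ha hc (by linarith) (by omega)]
  wlog hac : a ≤ c generalizing a b c
  · linarith [this hc hb ha (by linarith) (by omega) (by omega)]
  wlog hbc : b ≤ c generalizing a b c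
  · linarith [this ha hc hb (by linarith) (by omega) (by omega) (by omega)]
  obtain ha4 | rfl | rfl : 4 ≤ a ∨ a = 3 ∨ a = 2 := by omega
  · have h₁ := one_div_natCast_le_one_div (by norm_num) ha4
    have h₂ := one_div_natCast_le_one_div (by norm_num) (ha4.trans hab)
    have h₃ := one_div_natCast_le_one_div (by norm_num) (ha4.trans (hab.trans hbc))
    norm_num at h₁ h₂ h₃ ⊢
    linarith
  · obtain hb4 | rfl : 4 ≤ b ∨ b = 3 := by omega
    · have h₂ := one_div_natCast_le_one_div (by norm_num) hb4
      have h₃ := one_div_natCast_le_one_div (by norm_num) (hb4.trans hbc)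
      norm_num at h₂ h₃ ⊢
      linarith
    · have hc4 : 3 < c := lt_of_one_div_natCast_lt (by omega) (by norm_num at h ⊢; linarith)
      have h₃ := one_div_natCast_le_one_div (by norm_num) hc4
      norm_num at h₃ ⊢
      linarith
  · obtain hb5 | rfl | rfl | rfl : 5 ≤ b ∨ b = 4 ∨ b = 3 ∨ b = 2 := by omega
    · have h₂ := one_div_natCast_le_one_div (by norm_num) hb5
      have h₃ := one_div_natCast_le_one_div (by norm_num) (hb5.trans hbc)
      norm_num at h₂ h₃ ⊢
      linarith
    · have hc5 : 4 < c := lt_of_one_div_natCast_lt (by omega) (by norm_num at h ⊢; linarith)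
      have h₃ := one_div_natCast_le_one_div (by norm_num) hc5
      norm_num at h₃ ⊢
      linarith
    · have hc7 : 6 < c := lt_of_one_div_natCast_lt (by omega) (by norm_num at h ⊢; linarith)
      have h₃ := one_div_natCast_le_one_div (by norm_num) hc7
      norm_num at h₃ ⊢
      linarith
    · have hc0 : (0 : ℚ) < 1 / c := by positivity
      norm_num at h
      linarith

section

variable {ι : Type*} [Fintype ι] {m : ι → ℕ}

lemma sum_one_div_le_half (hm : ∀ i, 2 ≤ m i) :
    ∑ i, 1 / (m i : ℚ) ≤ Fintype.card ι / 2 := by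
  calc ∑ i, 1 / (m i : ℚ) ≤ ∑ _i : ι, 1 / (2 : ℚ) :=
        sum_le_sum fun i _ => by exact_mod_cast one_div_natCast_le_one_div two_pos (hm i)
    _ = Fintype.card ι / 2 := by simp [div_eq_mul_inv]

lemma sum_one_div_le_half_sub_of_three_le (hm : ∀ i, 2 ≤ m i) {j : ι}
    (hj : 3 ≤ m j) : ∑ i, 1 / (m i : ℚ) ≤ Fintype.card ι / 2 - 1 / 6 := by
  classical
  calc ∑ i, 1 / (m i : ℚ) ≤ ∑ i, (1 / 2 - if i = j then 1 / 6 else 0) := by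
        refine sum_le_sum fun i _ => ?_
        split_ifs with hij
        · subst hij
          have := one_div_natCast_le_one_div (by norm_num) hj
          norm_num at this ⊢
          linarith
        · have := one_div_natCast_le_one_div two_pos (hm i)
          norm_num at this ⊢
          linarith
    _ = Fintype.card ι / 2 - 1 / 6 := by simp [sum_sub_distrib, div_eq_mul_inv]

end

theorem one_div_fortyTwo_le_negOrbifoldEulerChar (ρ : ℕ) {r : ℕ} {m : Fin r → ℕ}
    (hm : ∀ i, 2 ≤ m i) (hpos : 0 < negOrbifoldEulerChar ρ m) :
    1 / 42 ≤ negOrbifoldEulerChar ρ m := by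
  rw [negOrbifoldEulerChar_eq] at hpos ⊢
  have hS : ∑ i, 1 / (m i : ℚ) ≤ r / 2 := by simpa using sum_one_div_le_half hm
  have hS₀ : 0 ≤ ∑ i, 1 / (m i : ℚ) := sum_nonneg fun i _ => by positivity
  obtain hbig | hsmall | ⟨rfl, rfl⟩ | ⟨rfl, rfl⟩ :
      5 ≤ 4 * ρ + r ∨ 2 * ρ + r ≤ 2 ∨ (ρ = 0 ∧ r = 3) ∨ (ρ = 0 ∧ r = 4) := by omega
  · have : (5 : ℚ) ≤ 4 * ρ + r := by exact_mod_cast hbig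
    linarith
  · have : (2 * ρ + r : ℚ) ≤ 2 := by exact_mod_cast hsmall
    linarith
  · rw [Fin.sum_univ_three] at hpos ⊢
    have := one_div_add_one_div_add_one_div_le_of_lt_one (hm 0) (hm 1) (hm 2)
      (by push_cast at hpos; linarith)
    push_cast
    linarith
  · obtain ⟨j, hj⟩ : ∃ j, 3 ≤ m j := by
      by_contra! hall
      have hm2 : ∀ i, m i = 2 := fun i => by have := hm i; have := hall i; omega
      norm_num [hm2] at hpos
    have := sum_one_div_le_half_sub_of_three_le hm hj
    simp only [Fintype.card_fin] at this
    push_cast at this ⊢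
    linarith

theorem hurwitz_bound_general
    (σ n : ℕ)
    (ρ r : ℕ) (m : Fin r → ℕ) (hm : ∀ i, 2 ≤ m i)
    (E : ℚ) (hE : E = 2 * (ρ : ℚ) - 2 + ∑ i : Fin r, (1 - 1 / (m i : ℚ)))
    (hpos : 0 < E) (heq : (2 * (σ : ℚ) - 2) = (n : ℚ) * E) :
    n ≤ 84 * (σ - 1) := by
  change E = negOrbifoldEulerChar ρ m at hE
  subst hE
  have hgap := one_div_fortyTwo_le_negOrbifoldEulerChar ρ hm hpos
  have hnQ : (n : ℚ) + 84 ≤ 84 * σ := by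
    linarith [mul_le_mul_of_nonneg_left hgap n.cast_nonneg]
  have hn : n + 84 ≤ 84 * σ := by exact_mod_cast hnQ
  omega

theorem hurwitz_bound
    (σ n : ℕ) (hσ : 2 ≤ σ) (hn : 1 ≤ n)
    (ρ r : ℕ) (m : Fin r → ℕ) (hm : ∀ i, 2 ≤ m i)
    (E : ℚ) (hE : E = 2 * (ρ : ℚ) - 2 + ∑ i : Fin r, (1 - 1 / (m i : ℚ)))
    (hpos : 0 < E) (heq : (2 * (σ : ℚ) - 2) = (n : ℚ) * E) :
    n ≤ 84 * (σ - 1) :=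
  hurwitz_bound_general σ n ρ r m hm E hE hpos heq
end

section
/- Let σ be a natural number and let H_σ be the group with presentation ⟨x, y ∣ x⁴ = y^{2(σ+1)} = (xy)² = (x⁻¹y)² = 1⟩, realized as the presented group (PresentedGroup) on two generators x, y with relators x⁴, y^{2(σ+1)}, (xy)², (x⁻¹y)². Then every element of H_σ can be written as x^a · y^b with natural numbers a < 4 and b < 2(σ+1); consequently the cardinality of H_σ is at most 8(σ + 1). -/
/-!
The relations `(x y)² = (x⁻¹ y)² = 1` say `y x y = x⁻¹` and `y x⁻¹ y = x`, so for every
integer `b` the element `y^b t y^b` lies in `{x, x⁻¹}` whenever `t` does. Hence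
`x^a y^b t = x^a (y^b t y^b) y^(-b)` is again of the form `x^a' y^b'` for `t = x^{±1}`, and
trivially so for `t = y^{±1}`; since `x` and `y` generate, every element is `x^a y^b`, and the
exponents can be reduced modulo the orders `4` and `2(σ+1)`.
-/

/-- The relators of the presentation
`⟨x, y ∣ x⁴ = y^(2(σ+1)) = (xy)² = (x⁻¹y)² = 1⟩`, where `x` corresponds to the
generator `true` and `y` to the generator `false`. -/
def accolaMaclachlanRels (σ : ℕ) : Set (FreeGroup Bool) :=
  {FreeGroup.of true ^ 4, FreeGroup.of false ^ (2 * (σ + 1)),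
    (FreeGroup.of true * FreeGroup.of false) ^ 2,
    ((FreeGroup.of true)⁻¹ * FreeGroup.of false) ^ 2}

open Subgroup

section NormalForm

variable {G : Type*} [Group G] {x y : G}

theorem mul_mul_eq_inv_of_mul_sq_eq_one (h : (x * y) ^ 2 = 1) : y * x * y = x⁻¹ :=
  eq_inv_of_mul_eq_one_right (by rw [← h, pow_two]; group)

theorem zpow_mul_mul_zpow_mem_pair (hxy : (x * y) ^ 2 = 1) (hxiy : (x⁻¹ * y) ^ 2 = 1) (b : ℤ)
    {t : G} (ht : t ∈ ({x, x⁻¹} : Set G)) : y ^ b * t * y ^ b ∈ ({x, x⁻¹} : Set G) := by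
  have hx : y * x * y = x⁻¹ := mul_mul_eq_inv_of_mul_sq_eq_one hxy
  have hxi : y * x⁻¹ * y = x := by simpa using mul_mul_eq_inv_of_mul_sq_eq_one hxiy
  have hx' : y⁻¹ * x * y⁻¹ = x⁻¹ := by
    calc y⁻¹ * x * y⁻¹ = (y * x⁻¹ * y)⁻¹ := by group
      _ = x⁻¹ := by rw [hxi]
  have hxi' : y⁻¹ * x⁻¹ * y⁻¹ = x := by
    calc y⁻¹ * x⁻¹ * y⁻¹ = (y * x * y)⁻¹ := by group
      _ = x := by rw [hx, inv_inv]
  induction b using Int.induction_on generalizing t with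
  | zero => simpa using ht
  | succ b ih =>
    have e : y ^ ((b : ℤ) + 1) * t * y ^ ((b : ℤ) + 1) =
        y * (y ^ (b : ℤ) * t * y ^ (b : ℤ)) * y := by group
    obtain h | h : _ = x ∨ _ = x⁻¹ := ih ht
    · rw [e, h, hx]; simp
    · rw [e, h, hxi]; simp
  | pred b ih =>
    have e : y ^ (-(b : ℤ) - 1) * t * y ^ (-(b : ℤ) - 1) =
        y⁻¹ * (y ^ (-(b : ℤ)) * t * y ^ (-(b : ℤ))) * y⁻¹ := by group
    obtain h | h : _ = x ∨ _ = x⁻¹ := ih ht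
    · rw [e, h, hx']; simp
    · rw [e, h, hxi']; simp

theorem exists_zpow_mul_zpow_of_mem_closure (hxy : (x * y) ^ 2 = 1) (hxiy : (x⁻¹ * y) ^ 2 = 1)
    {g : G} (hg : g ∈ closure {x, y}) : ∃ a b : ℤ, g = x ^ a * y ^ b := by
  have mul_pair : ∀ a b : ℤ, ∀ t ∈ ({x, x⁻¹} : Set G),
      ∃ a' b' : ℤ, x ^ a * y ^ b * t = x ^ a' * y ^ b' := by
    intro a b t ht
    obtain ⟨c, hc⟩ : ∃ c : ℤ, y ^ b * t * y ^ b = x ^ c := by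
      obtain h | h : _ = x ∨ _ = x⁻¹ := zpow_mul_mul_zpow_mem_pair hxy hxiy b ht
      · exact ⟨1, by rw [h, zpow_one]⟩
      · exact ⟨-1, by rw [h, zpow_neg_one]⟩
    refine ⟨a + c, -b, ?_⟩
    rw [zpow_add, ← hc]
    group
  induction hg using closure_induction_right with
  | one => exact ⟨0, 0, by simp⟩
  | mul_right g _ z hz ih =>
    obtain ⟨a, b, rfl⟩ := ih
    rcases hz with rfl | rfl
    · exact mul_pair a b z (by simp)
    · exact ⟨a, b + 1, by rw [zpow_add_one, mul_assoc]⟩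
  | mul_inv_cancel g _ z hz ih =>
    obtain ⟨a, b, rfl⟩ := ih
    rcases hz with rfl | rfl
    · exact mul_pair a b z⁻¹ (by simp)
    · exact ⟨a, b - 1, by rw [zpow_sub_one, mul_assoc]⟩

theorem exists_pow_lt_eq_zpow_of_pow_eq_one {n : ℕ} (hn : 0 < n) (h : x ^ n = 1) (a : ℤ) :
    ∃ k < n, x ^ a = x ^ k := by
  have hlt := Int.emod_lt_of_pos a (by exact_mod_cast hn : (0 : ℤ) < n)
  have hnonneg := Int.emod_nonneg a (by exact_mod_cast hn.ne' : (n : ℤ) ≠ 0)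
  refine ⟨(a % n).toNat, by omega, ?_⟩
  rw [zpow_eq_zpow_emod' a h, ← zpow_natCast, Int.toNat_of_nonneg hnonneg]

theorem exists_pow_mul_pow_of_closure_pair_eq_top {m n : ℕ} (hm : 0 < m) (hn : 0 < n)
    (hx : x ^ m = 1) (hy : y ^ n = 1) (hxy : (x * y) ^ 2 = 1) (hxiy : (x⁻¹ * y) ^ 2 = 1)
    (hgen : closure {x, y} = ⊤) (g : G) : ∃ a b : ℕ, a < m ∧ b < n ∧ g = x ^ a * y ^ b := by
  obtain ⟨a, b, rfl⟩ := exists_zpow_mul_zpow_of_mem_closure hxy hxiy (hgen ▸ mem_top g)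
  obtain ⟨a', ha', hxa⟩ := exists_pow_lt_eq_zpow_of_pow_eq_one hm hx a
  obtain ⟨b', hb', hyb⟩ := exists_pow_lt_eq_zpow_of_pow_eq_one hn hy b
  exact ⟨a', b', ha', hb', by rw [hxa, hyb]⟩

theorem Nat.card_le_mul_of_forall_eq_pow_mul_pow {m n : ℕ}
    (h : ∀ g : G, ∃ a b : ℕ, a < m ∧ b < n ∧ g = x ^ a * y ^ b) : Nat.card G ≤ m * n := by
  have hsurj : Function.Surjective fun p : Fin m × Fin n => x ^ (p.1 : ℕ) * y ^ (p.2 : ℕ) := by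
    intro g
    obtain ⟨a, b, ha, hb, rfl⟩ := h g
    exact ⟨(⟨a, ha⟩, ⟨b, hb⟩), rfl⟩
  simpa using Nat.card_le_card_of_surjective _ hsurj

end NormalForm

theorem PresentedGroup.closure_of_true_of_false (rels : Set (FreeGroup Bool)) :
    closure {PresentedGroup.of true, PresentedGroup.of false} =
      (⊤ : Subgroup (PresentedGroup rels)) := by
  rw [← PresentedGroup.closure_range_of rels]
  congr
  ext
  simp [or_comm]

theorem accolaMaclachlan_normal_form_and_card
    (σ : ℕ) :
    (∀ g : PresentedGroup (accolaMaclachlanRels σ),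
      ∃ a b : ℕ, a < 4 ∧ b < 2 * (σ + 1) ∧
        g = PresentedGroup.of true ^ a * PresentedGroup.of false ^ b) ∧
    Nat.card (PresentedGroup (accolaMaclachlanRels σ)) ≤ 8 * (σ + 1) := by
  have rel : ∀ r ∈ accolaMaclachlanRels σ, PresentedGroup.mk _ r = 1 :=
    fun _ => PresentedGroup.one_of_mem
  have hx := rel _ (by simp [accolaMaclachlanRels] : FreeGroup.of true ^ 4 ∈ _)
  have hy := rel _ (by simp [accolaMaclachlanRels] :
    FreeGroup.of false ^ (2 * (σ + 1)) ∈ _)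
  have hxy := rel _ (by simp [accolaMaclachlanRels] :
    (FreeGroup.of true * FreeGroup.of false) ^ 2 ∈ _)
  have hxiy := rel _ (by simp [accolaMaclachlanRels] :
    ((FreeGroup.of true)⁻¹ * FreeGroup.of false) ^ 2 ∈ _)
  simp only [map_pow, map_mul, map_inv] at hx hy hxy hxiy
  have normal_form := exists_pow_mul_pow_of_closure_pair_eq_top (by norm_num) (by positivity)
    hx hy hxy hxiy (PresentedGroup.closure_of_true_of_false _)
  refine ⟨normal_form, ?_⟩
  calc Nat.card (PresentedGroup (accolaMaclachlanRels σ)) ≤ 4 * (2 * (σ + 1)) :=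
        Nat.card_le_mul_of_forall_eq_pow_mul_pow normal_form
    _ = 8 * (σ + 1) := by ring
end

section
/- Let G be a group and H a subgroup of G of finite index m ≥ 1 such that H is generated (as a subgroup of G) by a finite set S of cardinality d, i.e. H = Subgroup.closure S with S a finset of cardinality d. Then G is generated by at most d + ⌈log₂ m⌉ elements: there exists a finset T of G with T.card ≤ d + Nat.clog 2 m and Subgroup.closure T = ⊤. -/
/-! Adjoining to a proper subgroup of finite index an element outside it at least halves the
index, so after at most `⌈log₂ m⌉` such steps the subgroup generated is all of `G`. -/

open Subgroup

theorem Nat.clog_two_add_one_le_of_two_mul_le {a b : ℕ} (ha : a ≠ 0) (h : 2 * a ≤ b) :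
    Nat.clog 2 a + 1 ≤ Nat.clog 2 b := by
  have hb : b ≤ 2 ^ Nat.clog 2 b := Nat.le_pow_clog one_lt_two b
  have hpos : 0 < Nat.clog 2 b := Nat.clog_pos one_lt_two (by omega)
  have ha_le : a ≤ 2 ^ (Nat.clog 2 b - 1) := by
    rw [← Nat.mul_le_mul_left_iff two_pos, ← _root_.pow_succ', Nat.sub_add_cancel hpos]
    omega
  have := Nat.clog_le_of_le_pow ha_le
  omega

namespace Subgroup

variable {G : Type*} [Group G]

theorem two_mul_index_le_of_lt {H K : Subgroup G} (h : H < K) (hH : H.index ≠ 0) :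
    2 * K.index ≤ H.index := by
  rw [← relIndex_mul_index h.le]
  have hne_one : H.relIndex K ≠ 1 := fun h1 => h.not_ge (relIndex_eq_one.mp h1)
  have hne_zero : H.relIndex K ≠ 0 := by
    rintro h0
    rw [← relIndex_mul_index h.le, h0, zero_mul] at hH
    exact hH rfl
  exact Nat.mul_le_mul_right _ (by omega)

theorem closure_lt_closure_insert {S : Set G} {g : G} (hg : g ∉ closure S) :
    closure S < closure (insert g S) :=
  SetLike.lt_iff_le_and_exists.mpr
    ⟨closure_mono (Set.subset_insert g S), g, subset_closure (Set.mem_insert g S), hg⟩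

theorem exists_finset_card_le_add_clog_index_closure_eq_top (S : Finset G)
    (hS : (closure (S : Set G)).index ≠ 0) :
    ∃ T : Finset G, T.card ≤ S.card + Nat.clog 2 (closure (S : Set G)).index ∧
      closure (T : Set G) = ⊤ := by
  classical
  induction hn : (closure (S : Set G)).index using Nat.strong_induction_on generalizing S with
  | _ n ih =>
  subst hn
  by_cases htop : closure (S : Set G) = ⊤
  · exact ⟨S, Nat.le_add_right _ _, htop⟩
  obtain ⟨g, hg⟩ : ∃ g, g ∉ closure (S : Set G) := by
    by_contra! h
    exact htop (eq_top_iff' _ |>.mpr h)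
  set K := closure ((insert g S : Finset G) : Set G)
  have hlt : closure (S : Set G) < K := by
    simpa only [K, Finset.coe_insert] using closure_lt_closure_insert hg
  have halve := two_mul_index_le_of_lt hlt hS
  have hK : K.index ≠ 0 := fun h0 => hS (Nat.eq_zero_of_zero_dvd (h0 ▸ index_dvd_of_le hlt.le))
  obtain ⟨T, hTcard, hT⟩ := ih K.index (by omega) (insert g S) hK rfl
  refine ⟨T, ?_, hT⟩
  calc T.card ≤ (insert g S).card + Nat.clog 2 K.index := hTcard
    _ ≤ S.card + (Nat.clog 2 K.index + 1) := by
        have := Finset.card_insert_le g S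
        omega
    _ ≤ S.card + Nat.clog 2 (closure (S : Set G)).index :=
        Nat.add_le_add_left (Nat.clog_two_add_one_le_of_two_mul_le hK halve) _

end Subgroup

theorem generators_of_group_from_finite_index_subgroup
    (G : Type*) [Group G] (H : Subgroup G) (m d : ℕ)
    (hm : H.index = m) (hm1 : 1 ≤ m)
    (S : Finset G) (hSd : S.card = d)
    (hSH : Subgroup.closure (S : Set G) = H) :
    ∃ T : Finset G, T.card ≤ d + Nat.clog 2 m ∧
      Subgroup.closure (T : Set G) = ⊤ := by
  subst hSd hm hSH
  exact exists_finset_card_le_add_clog_index_closure_eq_top S (by omega)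
end
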